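/- arXiv:math/0311205 — 2 statements merged into one kernel-verified Lean document; each statement's English description precedes it below -/
import Mathlib

section
/- Let r ≥ 1 be an integer, and let χ(x) = 1 if x is an integer and χ(x) = 0 otherwise. Then: H_1^{(r)} = 1 if r ≤ 2 and H_1^{(r)} = 0 if r ≥ 3; H_2^{(r)} = 1; 2·H_3^{(r)} = 3 + r − (−1)^{r/2}·χ(r/2); 6·H_4^{(r)} = 8 + 9r + r² − 2·χ(r/3); 24·H_5^{(r)} = 42 + 59r + 18r² + r³ − (18 + 3r)·(−1)^{r/2}·χ(r/2); and 120·H_6^{(r)} = 264 + 450r + 215r² + 30r³ + r⁴ − 24·χ(r/5). -/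
/-!
Since `(1 - z - z²)⁻¹ = ∑ F_{i+1} zⁱ`, the convolved numbers satisfy
`F^{(r+1)}_{m+1} = ∑_{i+j=m} F_{i+1} F^{(r)}_{j+1}`, so for fixed small `m` the number
`F^{(r)}_{m+1}` is a polynomial in `r`, found by induction on `r`.

In the Möbius sum defining `H^{(r)}_{m+1}`, when `m = p^{k+1}` is a prime power only the divisors
`d = 1` and `d = p` of `gcd(r, m)` are squarefree, so `r H^{(r)}_{m+1}` is `F^{(r)}_{m+1}`, corrected
by `± F^{(r/p)}_{m/p+1}` when `p ∣ r`; this covers `m = 2, 3, 4, 5`, while `m = 1` is coprime to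
every `r`. For `m = 0` every `F^{(r/d)}_1` is `1`, and the remaining sum `∑_{d ∣ r} μ(d) (-1)^{r/d}`
is evaluated by Möbius inversion.
-/

/-- `convFib r m` is the convolved Fibonacci number `F_{m+1}^{(r)}`, the coefficient of
`z^m` in `(1 - z - z^2)^{-r}`, given by `∑_{j_1+⋯+j_r=m} F_{j_1+1}⋯F_{j_r+1}`. -/
def convFib (r m : ℕ) : ℕ :=
  ∑ t ∈ Finset.Nat.antidiagonalTuple r m, ∏ i, Nat.fib (t i + 1)

/-- The convoluted convolved Fibonacci numbers:
`Gfib r m = G_{m+1}^{(r)} = (1/r) ∑_{d ∣ gcd(r,m)} μ(d) F_{m/d+1}^{(r/d)}`. -/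
noncomputable def Gfib (r m : ℕ) : ℚ :=
  (1 / (r : ℚ)) * ∑ d ∈ (Nat.gcd r m).divisors,
    ((ArithmeticFunction.moebius d : ℤ) : ℚ) * convFib (r / d) (m / d)

/-- The sign twisted convoluted convolved Fibonacci numbers:
`Hfib r m = H_{m+1}^{(r)} = ((-1)^r/r) ∑_{d ∣ gcd(r,m)} μ(d) (-1)^{r/d} F_{m/d+1}^{(r/d)}`. -/
noncomputable def Hfib (r m : ℕ) : ℚ :=
  ((-1 : ℚ) ^ r / (r : ℚ)) * ∑ d ∈ (Nat.gcd r m).divisors,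
    ((ArithmeticFunction.moebius d : ℤ) : ℚ) * (-1 : ℚ) ^ (r / d) * convFib (r / d) (m / d)

open Finset ArithmeticFunction
open scoped ArithmeticFunction.Moebius

theorem convFib_succ (r m : ℕ) :
    convFib (r + 1) m = ∑ p ∈ antidiagonal m, Nat.fib (p.1 + 1) * convFib r p.2 := by
  simp only [convFib, sum_eq_multiset_sum, Finset.Nat.antidiagonalTuple,
    Multiset.Nat.antidiagonalTuple, Multiset.map_coe, Multiset.sum_coe, List.Nat.antidiagonalTuple,
    List.flatMap_def, List.map_flatten, List.sum_flatten, List.map_map, Function.comp_def,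
    Fin.prod_univ_succ, Fin.cons_zero, Fin.cons_succ, ← List.sum_map_mul_left]
  rfl

theorem convFib_zero_right (r : ℕ) : convFib r 0 = 1 := by
  simp [convFib, Finset.Nat.antidiagonalTuple_zero_right]

theorem convFib_zero_left_succ (m : ℕ) : convFib 0 (m + 1) = 0 := by
  simp [convFib]

theorem convFib_one_right (r : ℕ) : convFib r 1 = r := by
  induction r with
  | zero => exact convFib_zero_left_succ 0
  | succ r ih => simp [convFib_succ, Finset.Nat.sum_antidiagonal_succ, convFib_zero_right, ih]

theorem convFib_two_right (r : ℕ) : 2 * (convFib r 2 : ℚ) = r ^ 2 + 3 * r := by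
  induction r with
  | zero => simp [convFib_zero_left_succ]
  | succ r ih =>
    simp only [convFib_succ, Nat.sum_antidiagonal_succ, HasAntidiagonal.antidiagonal_zero,
      sum_singleton, convFib_zero_right, convFib_one_right, zero_add, Nat.fib_one, Nat.fib_two,
      Nat.reduceAdd, one_mul, mul_one, Nat.cast_add, Nat.cast_one]
    linear_combination ih

theorem convFib_three_right (r : ℕ) : 6 * (convFib r 3 : ℚ) = r ^ 3 + 9 * r ^ 2 + 8 * r := by
  induction r with
  | zero => simp [convFib_zero_left_succ]
  | succ r ih =>
    simp only [convFib_succ, Nat.sum_antidiagonal_succ, HasAntidiagonal.antidiagonal_zero,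
      sum_singleton, convFib_zero_right, convFib_one_right, zero_add, Nat.fib_one, Nat.fib_two,
      Nat.reduceAdd, one_mul, mul_one, Nat.cast_add, Nat.cast_mul, Nat.cast_one]
    linear_combination ih + 3 * convFib_two_right r

theorem convFib_four_right (r : ℕ) :
    24 * (convFib r 4 : ℚ) = r ^ 4 + 18 * r ^ 3 + 59 * r ^ 2 + 42 * r := by
  induction r with
  | zero => simp [convFib_zero_left_succ]
  | succ r ih =>
    simp only [convFib_succ, Nat.sum_antidiagonal_succ, HasAntidiagonal.antidiagonal_zero,
      sum_singleton, convFib_zero_right, convFib_one_right, zero_add, Nat.fib_one, Nat.fib_two,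
      Nat.reduceAdd, one_mul, mul_one, Nat.cast_add, Nat.cast_mul, Nat.cast_one]
    linear_combination ih + 4 * convFib_three_right r + 24 * convFib_two_right r

theorem convFib_five_right (r : ℕ) :
    120 * (convFib r 5 : ℚ) = r ^ 5 + 30 * r ^ 4 + 215 * r ^ 3 + 450 * r ^ 2 + 264 * r := by
  induction r with
  | zero => simp [convFib_zero_left_succ]
  | succ r ih =>
    simp only [convFib_succ, Nat.sum_antidiagonal_succ, HasAntidiagonal.antidiagonal_zero,
      sum_singleton, convFib_zero_right, convFib_one_right, zero_add, Nat.fib_one, Nat.fib_two,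
      Nat.reduceAdd, one_mul, mul_one, Nat.cast_add, Nat.cast_mul, Nat.cast_one]
    linear_combination ih + 5 * convFib_four_right r + 40 * convFib_three_right r +
      180 * convFib_two_right r

theorem sum_divisors_prime_pow_succ_moebius_mul {R : Type*} [Ring R] {p : ℕ} (hp : p.Prime)
    (j : ℕ) (g : ℕ → R) : ∑ d ∈ (p ^ (j + 1)).divisors, (μ d : R) * g d = g 1 - g p := by
  rw [Nat.sum_divisors_prime_pow hp, sum_range_succ', sum_range_succ',
    sum_eq_zero fun i _ => by
      rw [moebius_apply_prime_pow hp (by omega), if_neg (by omega), Int.cast_zero, zero_mul]]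
  simp only [zero_add, pow_one, pow_zero, moebius_apply_prime hp, moebius_apply_one, Int.cast_neg,
    Int.cast_one, neg_one_mul, one_mul]
  abel

theorem sum_divisors_moebius_mul_neg_one_pow_div {R : Type*} [Ring R] {n : ℕ} (hn : n ≠ 0) :
    ∑ d ∈ n.divisors, (μ d : R) * (-1) ^ (n / d) =
      (if n = 1 then -1 else 0) + (if n = 2 then 2 else 0) := by
  have h_inv : ∀ m > 0, ∑ d ∈ m.divisors,
      ((if d = 1 then -1 else 0) + (if d = 2 then 2 else 0) : R) = (-1) ^ m := by
    intro m hm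
    rw [sum_add_distrib, sum_ite_eq', sum_ite_eq', if_pos (Nat.one_mem_divisors.mpr hm.ne')]
    rcases Nat.even_or_odd m with he | ho
    · rw [if_pos (Nat.mem_divisors.mpr ⟨he.two_dvd, hm.ne'⟩), he.neg_one_pow]
      norm_num
    · rw [if_neg (by simp [Nat.mem_divisors, ← even_iff_two_dvd, Nat.not_even_iff_odd.mpr ho]),
        ho.neg_one_pow]
      norm_num
  rw [← Nat.sum_divisorsAntidiagonal (fun i j => (μ i : R) * (-1) ^ j)]
  exact sum_eq_iff_sum_mul_moebius_eq.mp h_inv n (Nat.pos_of_ne_zero hn)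

theorem mul_Hfib_of_coprime {r m : ℕ} (hr : r ≠ 0) (h : r.Coprime m) :
    r * Hfib r m = convFib r m := by
  have hr' : (r : ℚ) ≠ 0 := Nat.cast_ne_zero.mpr hr
  rw [Hfib, h.gcd_eq_one, Nat.divisors_one, sum_singleton, Nat.div_one, Nat.div_one]
  field_simp
  rw [moebius_apply_one, Int.cast_one, mul_one, ← pow_mul, pow_mul', neg_one_sq, one_pow, one_mul]

theorem mul_Hfib_prime_pow_of_not_dvd {p r : ℕ} (hp : p.Prime) (hr : r ≠ 0) (h : ¬ p ∣ r)
    (k : ℕ) : r * Hfib r (p ^ k) = convFib r (p ^ k) :=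
  mul_Hfib_of_coprime hr ((hp.coprime_iff_not_dvd.mpr h).symm.pow_right k)

theorem mul_Hfib_prime_mul_prime_pow {p s : ℕ} (hp : p.Prime) (hs : s ≠ 0) (k : ℕ) :
    (p * s : ℚ) * Hfib (p * s) (p ^ (k + 1)) =
      convFib (p * s) (p ^ (k + 1)) - (-1) ^ ((p + 1) * s) * convFib s (p ^ k) := by
  obtain ⟨j, -, hj⟩ := (Nat.dvd_prime_pow hp).mp (Nat.gcd_dvd_right s (p ^ k))
  have hgcd : Nat.gcd (p * s) (p ^ (k + 1)) = p ^ (j + 1) := by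
    rw [pow_succ', Nat.gcd_mul_left, hj, pow_succ']
  have hps : ((p * s : ℕ) : ℚ) ≠ 0 := by have := hp.pos; positivity
  rw [Hfib, hgcd]
  simp_rw [mul_assoc _ ((-1 : ℚ) ^ _)]
  rw [sum_divisors_prime_pow_succ_moebius_mul hp, Nat.div_one, Nat.div_one,
    Nat.mul_div_cancel_left _ hp.pos, pow_succ' p k, Nat.mul_div_cancel_left _ hp.pos,
    ← Nat.cast_mul, ← mul_assoc, mul_div_cancel₀ _ hps, ← pow_succ']
  have hsq : (-1 : ℚ) ^ (p * s) * (-1) ^ (p * s) = 1 := by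
    rw [← mul_pow, neg_mul_neg, one_mul, one_pow]
  linear_combination (convFib (p * s) (p ^ (k + 1)) : ℚ) * hsq

theorem Hfib_zero {r : ℕ} (hr : r ≠ 0) : Hfib r 0 = if r ≤ 2 then 1 else 0 := by
  simp only [Hfib, Nat.gcd_zero_right, Nat.zero_div, convFib_zero_right, Nat.cast_one, mul_one,
    sum_divisors_moebius_mul_neg_one_pow_div hr]
  obtain rfl | rfl | hr3 : r = 1 ∨ r = 2 ∨ 3 ≤ r := by omega
  · norm_num
  · norm_num
  · simp [show r ≠ 1 by omega, show r ≠ 2 by omega, show ¬ r ≤ 2 by omega]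

theorem Hfib_one {r : ℕ} (hr : r ≠ 0) : Hfib r 1 = 1 := by
  have key := mul_Hfib_of_coprime hr (Nat.coprime_one_right r)
  rw [convFib_one_right] at key
  exact mul_left_cancel₀ (Nat.cast_ne_zero.mpr hr) (key.trans (mul_one _).symm)

theorem Hfib_two {r : ℕ} (hr : r ≠ 0) :
    2 * Hfib r 2 = 3 + (r : ℚ) - (if 2 ∣ r then (-1 : ℚ) ^ (r / 2) else 0) := by
  have hr' : (r : ℚ) ≠ 0 := Nat.cast_ne_zero.mpr hr
  apply mul_left_cancel₀ hr'
  by_cases h2 : 2 ∣ r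
  · obtain ⟨s, rfl⟩ := h2
    have key := mul_Hfib_prime_mul_prime_pow Nat.prime_two (right_ne_zero_of_mul hr) 0
    norm_num [pow_mul, convFib_one_right] at key
    rw [if_pos (dvd_mul_right 2 s), Nat.mul_div_cancel_left s two_pos]
    linear_combination (norm := (push_cast; ring)) 2 * key + convFib_two_right (2 * s)
  · have key := mul_Hfib_prime_pow_of_not_dvd Nat.prime_two hr h2 1
    norm_num at key
    rw [if_neg h2]
    linear_combination 2 * key + convFib_two_right r

theorem Hfib_three {r : ℕ} (hr : r ≠ 0) :
    6 * Hfib r 3 = 8 + 9 * (r : ℚ) + (r : ℚ) ^ 2 - 2 * (if 3 ∣ r then (1 : ℚ) else 0) := by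
  have hr' : (r : ℚ) ≠ 0 := Nat.cast_ne_zero.mpr hr
  apply mul_left_cancel₀ hr'
  by_cases h3 : 3 ∣ r
  · obtain ⟨s, rfl⟩ := h3
    have key := mul_Hfib_prime_mul_prime_pow Nat.prime_three (right_ne_zero_of_mul hr) 0
    norm_num [pow_mul, convFib_one_right] at key
    rw [if_pos (dvd_mul_right 3 s)]
    linear_combination (norm := (push_cast; ring)) 6 * key + convFib_three_right (3 * s)
  · have key := mul_Hfib_prime_pow_of_not_dvd Nat.prime_three hr h3 1
    norm_num at key
    rw [if_neg h3]
    linear_combination 6 * key + convFib_three_right r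

theorem Hfib_four {r : ℕ} (hr : r ≠ 0) :
    24 * Hfib r 4 = 42 + 59 * (r : ℚ) + 18 * (r : ℚ) ^ 2 + (r : ℚ) ^ 3 -
      (18 + 3 * (r : ℚ)) * (if 2 ∣ r then (-1 : ℚ) ^ (r / 2) else 0) := by
  have hr' : (r : ℚ) ≠ 0 := Nat.cast_ne_zero.mpr hr
  apply mul_left_cancel₀ hr'
  by_cases h2 : 2 ∣ r
  · obtain ⟨s, rfl⟩ := h2
    have key := mul_Hfib_prime_mul_prime_pow Nat.prime_two (right_ne_zero_of_mul hr) 1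
    norm_num [pow_mul] at key
    rw [if_pos (dvd_mul_right 2 s), Nat.mul_div_cancel_left s two_pos]
    linear_combination (norm := (push_cast; ring))
      24 * key + convFib_four_right (2 * s) - 12 * (-1 : ℚ) ^ s * convFib_two_right s
  · have key := mul_Hfib_prime_pow_of_not_dvd Nat.prime_two hr h2 2
    norm_num at key
    rw [if_neg h2]
    linear_combination 24 * key + convFib_four_right r

theorem Hfib_five {r : ℕ} (hr : r ≠ 0) :
    120 * Hfib r 5 = 264 + 450 * (r : ℚ) + 215 * (r : ℚ) ^ 2 + 30 * (r : ℚ) ^ 3 +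
      (r : ℚ) ^ 4 - 24 * (if 5 ∣ r then (1 : ℚ) else 0) := by
  have hr' : (r : ℚ) ≠ 0 := Nat.cast_ne_zero.mpr hr
  apply mul_left_cancel₀ hr'
  by_cases h5 : 5 ∣ r
  · obtain ⟨s, rfl⟩ := h5
    have key := mul_Hfib_prime_mul_prime_pow Nat.prime_five (right_ne_zero_of_mul hr) 0
    norm_num [pow_mul, convFib_one_right] at key
    rw [if_pos (dvd_mul_right 5 s)]
    linear_combination (norm := (push_cast; ring)) 120 * key + convFib_five_right (5 * s)
  · have key := mul_Hfib_prime_pow_of_not_dvd Nat.prime_five hr h5 1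
    norm_num at key
    rw [if_neg h5]
    linear_combination 120 * key + convFib_five_right r

/-- Theorem (twee): explicit formulas for `H_{j+1}^{(r)} = Hfib r j` for small `j`,
where `χ(r/2)`, `χ(r/3)`, `χ(r/5)` are replaced by the conditions `2 ∣ r`, `3 ∣ r`,
`5 ∣ r` respectively. -/
theorem Hfib_low_degree_formulas (r : ℕ) (hr : 1 ≤ r) :
    (r ≤ 2 → Hfib r 0 = 1) ∧ (3 ≤ r → Hfib r 0 = 0) ∧
    Hfib r 1 = 1 ∧
    2 * Hfib r 2 = 3 + (r : ℚ) - (if 2 ∣ r then (-1 : ℚ) ^ (r / 2) else 0) ∧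
    6 * Hfib r 3 = 8 + 9 * (r : ℚ) + (r : ℚ) ^ 2 - 2 * (if 3 ∣ r then (1 : ℚ) else 0) ∧
    24 * Hfib r 4 = 42 + 59 * (r : ℚ) + 18 * (r : ℚ) ^ 2 + (r : ℚ) ^ 3 -
      (18 + 3 * (r : ℚ)) * (if 2 ∣ r then (-1 : ℚ) ^ (r / 2) else 0) ∧
    120 * Hfib r 5 = 264 + 450 * (r : ℚ) + 215 * (r : ℚ) ^ 2 + 30 * (r : ℚ) ^ 3 +
      (r : ℚ) ^ 4 - 24 * (if 5 ∣ r then (1 : ℚ) else 0) := by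
  have hr0 : r ≠ 0 := Nat.one_le_iff_ne_zero.mp hr
  refine ⟨fun h => ?_, fun h => ?_, Hfib_one hr0, Hfib_two hr0, Hfib_three hr0, Hfib_four hr0,
    Hfib_five hr0⟩
  · rw [Hfib_zero hr0, if_pos h]
  · rw [Hfib_zero hr0, if_neg (by omega)]
end

section
/- Fix an integer j ≥ 3. As r → ∞, H_{j+1}^{(r)} − r^{j−1}/j! = O(r^{j−2}); that is, the function r ↦ H_{j+1}^{(r)} − r^{j−1}/j! is big-O of r ↦ r^{j−2} along the filter atTop. -/
open Filter Asymptotics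

/-! Expanding `(1 - z - z²)^{-r} = ∑ₖ multichoose(r, k) (z + z²)ᵏ` gives
`F_{j+1}^{(r)} = ∑ₖ C(k, j - k) r(r+1)⋯(r+k-1)/k!`, a polynomial in `r` of degree `j` with leading
coefficient `1/j!`; so the term `d = 1` of `H_{j+1}^{(r)}`, which is `F_{j+1}^{(r)}/r`, equals
`r^{j-1}/j! + O(r^{j-2})`. Every other term is at most `F_{j/d+1}^{(r/d)}/r = O(r^{j/d-1})` with
`j/d ≤ j - 1`; reading the divisors of `gcd(r, j)` as the divisors of `j` that divide `r` makes
these a fixed finite family of functions of `r`. -/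

open Finset

namespace PowerSeries

theorem coeff_pow_eq_sum_antidiagonalTuple {R : Type*} [CommSemiring R] (φ : R⟦X⟧) (r m : ℕ) :
    coeff m (φ ^ r) = ∑ t ∈ Nat.antidiagonalTuple r m, ∏ i, coeff (t i) φ := by
  rw [← Fin.prod_const, coeff_prod, finsuppAntidiag, sum_map,
    ← piAntidiag_univ_fin_eq_antidiagonalTuple]
  exact sum_attach _ (fun t : Fin r → ℕ => ∏ i, coeff (t i) φ)

variable {R : Type*} [CommRing R]

theorem coeff_one_add_X_pow (d n : ℕ) : coeff n ((1 + X : R⟦X⟧) ^ d) = d.choose n := by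
  have h : (1 + X : R⟦X⟧) ^ d = ((1 + Polynomial.X : Polynomial R) ^ d : Polynomial R) := by simp
  rw [h, Polynomial.coeff_coe, Polynomial.coeff_one_add_X_pow]

theorem coeff_X_add_X_sq_pow (k m : ℕ) :
    coeff m ((X + X ^ 2 : R⟦X⟧) ^ k) = if k ≤ m then (k.choose (m - k) : R) else 0 := by
  rw [show (X + X ^ 2 : R⟦X⟧) = X * (1 + X) by ring, mul_pow, coeff_X_pow_mul',
    coeff_one_add_X_pow]

theorem hasSubst_X_add_X_sq : HasSubst (X + X ^ 2 : R⟦X⟧) :=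
  HasSubst.of_constantCoeff_zero' (by simp)

theorem coeff_invOneSubPow (r n : ℕ) : coeff n (invOneSubPow R r : R⟦X⟧) = r.multichoose n := by
  cases r with
  | zero => cases n <;> simp [invOneSubPow_zero, coeff_one]
  | succ s => simp [invOneSubPow_val_succ_eq_mk_add_choose, Nat.multichoose_eq, Nat.choose_symm_add]

variable (R) in
noncomputable def fibSeries : R⟦X⟧ := mk fun n => (Nat.fib (n + 1) : R)

theorem fibSeries_mul_one_sub_X_sub_X_sq : fibSeries R * (1 - X - X ^ 2) = 1 := by
  ext n
  rcases n with _ | _ | n <;>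
    simp [fibSeries, mul_sub, coeff_one, coeff_mul_X_pow', Nat.fib_add_two]

theorem fibSeries_pow_eq_subst (r : ℕ) :
    fibSeries R ^ r = subst (X + X ^ 2 : R⟦X⟧) (invOneSubPow R r : R⟦X⟧) := by
  have hinv : (invOneSubPow R r : R⟦X⟧) * (1 - X) ^ r = 1 := by
    rw [← invOneSubPow_inv_eq_one_sub_pow]
    exact Units.mul_inv _
  have hsubst := congrArg (substAlgHom (hasSubst_X_add_X_sq (R := R))) hinv
  simp only [map_mul, map_pow, map_sub, map_one, substAlgHom_X, coe_substAlgHom] at hsubst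
  refine left_inv_eq_right_inv (a := (1 - X - X ^ 2) ^ r) ?_ ?_
  · rw [← mul_pow, fibSeries_mul_one_sub_X_sub_X_sq, one_pow]
  · rwa [mul_comm, sub_sub]

theorem coeff_fibSeries_pow (r m : ℕ) : coeff m (fibSeries R ^ r) = convFib r m := by
  simp [coeff_pow_eq_sum_antidiagonalTuple, fibSeries, convFib]

end PowerSeries

open PowerSeries in
theorem convFib_eq_sum_choose_mul_multichoose (r m : ℕ) :
    convFib r m = ∑ k ∈ range (m + 1), k.choose (m - k) * r.multichoose k := by
  apply Nat.cast_injective (R := ℤ)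
  rw [← coeff_fibSeries_pow, fibSeries_pow_eq_subst, coeff_subst' hasSubst_X_add_X_sq,
    finsum_eq_sum_of_support_subset (s := range (m + 1))]
  · push_cast
    refine sum_congr rfl fun k hk => ?_
    rw [coeff_invOneSubPow, coeff_X_add_X_sq_pow, if_pos (Nat.lt_succ_iff.mp (mem_range.mp hk)),
      smul_eq_mul, mul_comm]
  · intro k hk
    rw [Function.mem_support, coeff_X_add_X_sq_pow] at hk
    by_contra hkm
    exact hk (by rw [if_neg (by simpa [Nat.lt_succ_iff] using hkm), smul_zero])

open Polynomial in
noncomputable def convFibPoly (m : ℕ) : ℝ[X] :=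
  ∑ k ∈ range (m + 1), C ((k.choose (m - k) : ℝ) / k.factorial) * ascPochhammer ℝ k

namespace convFibPoly
open Polynomial

theorem eval_natCast (r m : ℕ) : (convFibPoly m).eval (r : ℝ) = convFib r m := by
  rw [convFib_eq_sum_choose_mul_multichoose, convFibPoly, eval_finsetSum]
  push_cast
  refine sum_congr rfl fun k _ => ?_
  rw [eval_mul, eval_C, ascPochhammer_nat_eq_natCast_ascFactorial,
    Nat.ascFactorial_eq_factorial_mul_choose', ← Nat.multichoose_eq]
  push_cast
  field_simp

theorem natDegree_le (m : ℕ) : (convFibPoly m).natDegree ≤ m :=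
  natDegree_sum_le_of_forall_le _ _ fun k hk =>
    (natDegree_C_mul_le _ _).trans <| by
      rw [ascPochhammer_natDegree]; exact Nat.lt_succ_iff.mp (mem_range.mp hk)

theorem coeff_self (m : ℕ) : (convFibPoly m).coeff m = 1 / m.factorial := by
  have hlead : (ascPochhammer ℝ m).coeff m = 1 := by
    simpa using (monic_ascPochhammer ℝ m).coeff_natDegree
  rw [convFibPoly, finsetSum_coeff, sum_range_succ, sum_eq_zero, zero_add, coeff_C_mul, hlead]
  · simp
  · intro k hk
    rw [coeff_C_mul, coeff_eq_zero_of_natDegree_lt, mul_zero]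
    rw [ascPochhammer_natDegree]; exact mem_range.mp hk

end convFibPoly

open Polynomial in
theorem Polynomial.isBigO_eval_natCast_pow {p : ℝ[X]} {n : ℕ} (hp : p.natDegree ≤ n) :
    (fun r : ℕ => p.eval (r : ℝ)) =O[atTop] fun r : ℕ => (r : ℝ) ^ n := by
  have hdeg : p.degree ≤ (X ^ n : ℝ[X]).degree := by
    rw [degree_X_pow]; exact degree_le_of_natDegree_le hp
  simpa [Function.comp_def] using
    (isBigO_atTop_of_degree_le p _ hdeg).comp_tendsto tendsto_natCast_atTop_atTop

theorem isBigO_convFib {m n : ℕ} (hmn : m ≤ n) :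
    (fun r : ℕ => (convFib r m : ℝ)) =O[atTop] fun r : ℕ => (r : ℝ) ^ n := by
  simpa [convFibPoly.eval_natCast] using
    Polynomial.isBigO_eval_natCast_pow ((convFibPoly.natDegree_le m).trans hmn)

open Polynomial in
theorem isBigO_convFib_sub_pow_div_factorial (m : ℕ) :
    (fun r : ℕ => (convFib r m : ℝ) - (r : ℝ) ^ m / m.factorial) =O[atTop]
      fun r : ℕ => (r : ℝ) ^ (m - 1) := by
  set p := convFibPoly m - C (1 / (m.factorial : ℝ)) * X ^ m
  have hp : p.natDegree ≤ m - 1 := by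
    refine natDegree_le_pred ((natDegree_sub_le _ _).trans ?_) ?_
    · exact max_le (convFibPoly.natDegree_le m) (natDegree_C_mul_X_pow_le _ _)
    · simp [p, convFibPoly.coeff_self]
  simpa [p, convFibPoly.eval_natCast, div_eq_inv_mul] using isBigO_eval_natCast_pow hp

theorem Hfib_eq {r j : ℕ} (hr : r ≠ 0) (hj : j ≠ 0) :
    Hfib r j = convFib r j / r + (-1) ^ r / r * ∑ d ∈ j.divisors.erase 1,
      if d ∣ r then (ArithmeticFunction.moebius d : ℚ) * (-1) ^ (r / d) * convFib (r / d) (j / d)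
      else 0 := by
  have hdiv : (r.gcd j).divisors = j.divisors.filter (· ∣ r) := by
    ext d; simp [Nat.dvd_gcd_iff, hj, and_comm]
  rw [Hfib, hdiv, sum_filter, ← add_sum_erase _ _ (Nat.one_mem_divisors.mpr hj)]
  simp only [one_dvd, if_true, ArithmeticFunction.moebius_apply_one, Nat.div_one]
  have hsq : ((-1 : ℚ) ^ r) * (-1) ^ r = 1 := by rw [← mul_pow]; norm_num
  field_simp
  linear_combination (convFib r j : ℚ) * hsq

theorem isBigO_convFib_div_const {d m n : ℕ} (hd : d ≠ 0) (hmn : m ≤ n) :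
    (fun r : ℕ => (convFib (r / d) m : ℝ)) =O[atTop] fun r : ℕ => (r : ℝ) ^ n := by
  refine ((isBigO_convFib hmn).comp_tendsto (Nat.tendsto_div_const_atTop hd)).trans
    (isBigO_of_le _ fun r => ?_)
  simp only [Function.comp_apply, norm_pow, RCLike.norm_natCast]
  gcongr
  exact Nat.div_le_self r d

theorem isBigO_sum_divisors_erase_one (j : ℕ) :
    (fun r : ℕ => ∑ d ∈ j.divisors.erase 1,
      if d ∣ r then (ArithmeticFunction.moebius d : ℝ) * (-1) ^ (r / d) * convFib (r / d) (j / d)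
      else 0) =O[atTop] fun r : ℕ => (r : ℝ) ^ (j - 1) := by
  refine IsBigO.fun_sum fun d hd => ?_
  obtain ⟨hd1, hdj⟩ := mem_erase.mp hd
  have hd2 : 2 ≤ d := by have := Nat.pos_of_mem_divisors hdj; omega
  have hjd : j / d ≤ j - 1 := by
    have : j / d ≤ j / 2 := Nat.div_le_div_left hd2 two_pos
    omega
  refine (isBigO_of_le _ fun r => ?_).trans (isBigO_convFib_div_const (d := d) (by omega) hjd)
  have hμ : |(ArithmeticFunction.moebius d : ℝ)| ≤ 1 := by
    exact_mod_cast ArithmeticFunction.abs_moebius_le_one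
  split_ifs
  · simp only [norm_mul, norm_pow, norm_neg, norm_one, one_pow, mul_one, Real.norm_eq_abs]
    exact mul_le_of_le_one_left (abs_nonneg _) hμ
  · simp

theorem isBigO_mul_of_isBigO_inv {u f : ℕ → ℝ} {n : ℕ}
    (hu : u =O[atTop] fun r : ℕ => (r : ℝ)⁻¹) (hf : f =O[atTop] fun r : ℕ => (r : ℝ) ^ (n + 1)) :
    (fun r => u r * f r) =O[atTop] fun r : ℕ => (r : ℝ) ^ n := by
  refine (hu.mul hf).trans_eventuallyEq ?_
  filter_upwards [eventually_ne_atTop 0] with r hr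
  field_simp
  ring

/-- For fixed `j ≥ 3`, as `r → ∞`, `H_{j+1}^{(r)} - r^{j-1}/j! = O(r^{j-2})`. -/
theorem Hfib_asymptotic (j : ℕ) (hj : 3 ≤ j) :
    (fun r : ℕ => ((Hfib r j : ℚ) : ℝ) - (r : ℝ) ^ (j - 1) / (Nat.factorial j : ℝ))
      =O[atTop] fun r : ℕ => (r : ℝ) ^ (j - 2) := by
  have hj' : j - 1 = j - 2 + 1 := by omega
  have hmain := isBigO_mul_of_isBigO_inv (isBigO_refl (fun r : ℕ => (r : ℝ)⁻¹) atTop)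
    (hj' ▸ isBigO_convFib_sub_pow_div_factorial j)
  have herr := isBigO_mul_of_isBigO_inv (u := fun r => (-1 : ℝ) ^ r / r)
    (isBigO_of_le _ fun r => by simp) (hj' ▸ isBigO_sum_divisors_erase_one j)
  refine (hmain.add herr).congr' ?_ EventuallyEq.rfl
  filter_upwards [eventually_ne_atTop 0] with r hr
  rw [Hfib_eq hr (by omega)]
  push_cast [apply_ite (Rat.cast : ℚ → ℝ)]
  rw [← pow_sub_one_mul (by omega : j ≠ 0)]
  field_simp
  ring
end
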